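/- In any ordered goods instance with m ≥ 2 items, if there is an agent i and an item j with v_i(j) ≥ μ_i and v_{i'}(j) < μ_{i'} for every other agent i' ≠ i, then removing agent i together with the items {j, j'}, where j' is the least valuable item of M ∖ {j} (i.e., j' = m if j ≠ m and j' = m − 1 if j = m), is a valid reduction. -/

import Mathlib

open Finset

/-- `A` is an (ordered) partition of the item set `M` into bundles indexed by
the agent set `N`: bundles are pairwise disjoint subsets of `M` whose union is `M`. -/
def IsPartition (N M : Finset ℕ) (A : ℕ → Finset ℕ) : Prop :=
  (∀ i ∈ N, A i ⊆ M) ∧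
  (∀ i ∈ N, ∀ j ∈ N, i ≠ j → Disjoint (A i) (A j)) ∧
  N.biUnion A = M

/-- Additive value of a bundle `B` under item values `v`. -/
noncomputable def bval (v : ℕ → ℝ) (B : Finset ℕ) : ℝ := ∑ g ∈ B, v g

/-- The maximin share of an agent with item values `v`, over the instance with
agent set `N` and item set `M`: the largest, over all partitions, of the minimum
bundle value. -/
noncomputable def mms (N M : Finset ℕ) (v : ℕ → ℝ) : ℝ :=
  sSup { x | ∃ A : ℕ → Finset ℕ, IsPartition N M A ∧
    x = sInf ((fun i => bval v (A i)) '' (N : Set ℕ)) }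

/-- `A` is an MMS partition for an agent with item values `v`: every bundle is
worth at least the agent's maximin share. -/
def IsMMSPartition (N M : Finset ℕ) (v : ℕ → ℝ) (A : ℕ → Finset ℕ) : Prop :=
  IsPartition N M A ∧ ∀ j ∈ N, mms N M v ≤ bval v (A j)

/-- The instance `(N, M, v)` admits an MMS allocation: an allocation giving
every agent a bundle worth at least her maximin share. -/
def ExistsMMSAllocation (N M : Finset ℕ) (v : ℕ → ℕ → ℝ) : Prop :=
  ∃ A : ℕ → Finset ℕ, IsPartition N M A ∧
    ∀ i ∈ N, mms N M (v i) ≤ bval (v i) (A i)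

/-- A goods instance: all item values are non-negative. -/
def GoodsInstance (N M : Finset ℕ) (v : ℕ → ℕ → ℝ) : Prop :=
  ∀ i ∈ N, ∀ j ∈ M, 0 ≤ v i j

/-- A chores instance: all item values are non-positive. -/
def ChoresInstance (N M : Finset ℕ) (v : ℕ → ℕ → ℝ) : Prop :=
  ∀ i ∈ N, ∀ j ∈ M, v i j ≤ 0

/-- Ordered goods instance: lower-numbered items are (weakly) more valuable. -/
def OrderedGoods (N M : Finset ℕ) (v : ℕ → ℕ → ℝ) : Prop :=
  ∀ i ∈ N, ∀ j ∈ M, ∀ k ∈ M, j ≤ k → v i k ≤ v i j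

/-- Ordered chores instance: lower-numbered items are (weakly) worse. -/
def OrderedChores (N M : Finset ℕ) (v : ℕ → ℕ → ℝ) : Prop :=
  ∀ i ∈ N, ∀ j ∈ M, ∀ k ∈ M, j ≤ k → v i j ≤ v i k

/-- Removing agents `N'` and items `M'` is a valid reduction: `M'` can be
partitioned among the agents of `N'` so that each receives a bundle worth at
least her MMS in the original instance, and in the reduced instance every
remaining agent's MMS is at least her MMS in the original instance. -/
def ValidReduction (N M : Finset ℕ) (v : ℕ → ℕ → ℝ) (N' M' : Finset ℕ) : Prop :=
  N' ⊆ N ∧ M' ⊆ M ∧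
  (∃ B : ℕ → Finset ℕ, IsPartition N' M' B ∧
    ∀ i ∈ N', mms N M (v i) ≤ bval (v i) (B i)) ∧
  ∀ i ∈ N \ N', mms N M (v i) ≤ mms (N \ N') (M \ M') (v i)

/-- In an ordered instance, bundle `B` dominates bundle `B'`: there is an
injective map `f : B' → B` with `f j ≤ j` for all `j ∈ B'`. -/
def Dominates (B B' : Finset ℕ) : Prop :=
  ∃ f : ℕ → ℕ, Set.InjOn f (B' : Set ℕ) ∧ ∀ j ∈ B', f j ∈ B ∧ f j ≤ j

/-!
Agent `i` is satisfied by `{j, j'}` because `v_i(j) ≥ μ_i`. For any other agent, relabel an MMS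
partition `A` of her so that `j ∈ A_i`. Since `v(j) < μ`, the bundle `A_i` holds a second item `g`,
and `v(j') ≤ v(g)` because `j'` is the least valuable item other than `j`; hence
`v(A_i) ≥ v(j) + v(j')`. Merging `A_i` into the bundle that holds `j'` (into any other bundle if
`j' ∈ A_i`) and deleting `j` and `j'` leaves `n - 1` bundles, none worth less than before.
-/

namespace IsPartition

variable {N M : Finset ℕ} {A : ℕ → Finset ℕ}

theorem singleton (i : ℕ) (M : Finset ℕ) : IsPartition {i} M fun _ => M :=
  ⟨fun _ _ => subset_rfl, fun _ ha _ hb hab => absurd ((mem_singleton.1 ha).trans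
    (mem_singleton.1 hb).symm) hab, singleton_biUnion⟩

theorem comp_perm (hA : IsPartition N M A) (σ : Equiv.Perm ℕ) (hσ : ∀ x, σ x ∈ N ↔ x ∈ N) :
    IsPartition N M (A ∘ σ) := by
  obtain ⟨hsub, hdisj, hcov⟩ := hA
  refine ⟨fun s hs => hsub _ ((hσ s).2 hs),
    fun a ha b hb hab => hdisj _ ((hσ a).2 ha) _ ((hσ b).2 hb) (σ.injective.ne hab), ?_⟩
  rw [← hcov]
  ext x
  simp only [mem_biUnion, Function.comp_apply]
  exact ⟨fun ⟨s, hs, hx⟩ => ⟨σ s, (hσ s).2 hs, hx⟩,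
    fun ⟨s, hs, hx⟩ => ⟨σ.symm s, (hσ _).1 (by simpa using hs), by simpa using hx⟩⟩

theorem sdiff (hA : IsPartition N M A) (S : Finset ℕ) :
    IsPartition N (M \ S) fun s => A s \ S := by
  obtain ⟨hsub, hdisj, hcov⟩ := hA
  refine ⟨fun s hs => sdiff_subset_sdiff (hsub s hs) subset_rfl,
    fun a ha b hb hab => (hdisj a ha b hb hab).mono sdiff_subset sdiff_subset, ?_⟩
  rw [← hcov]
  ext x
  simp only [mem_biUnion, mem_sdiff]
  tauto

theorem merge (hA : IsPartition N M A) {i t : ℕ} (hi : i ∈ N) (ht : t ∈ N) (hti : t ≠ i) :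
    IsPartition (N \ {i}) M (Function.update A t (A t ∪ A i)) := by
  obtain ⟨hsub, hdisj, hcov⟩ := hA
  have hdisj_merged : ∀ s ∈ N \ {i}, s ≠ t → Disjoint (A t ∪ A i) (A s) := fun s hs hst => by
    rw [mem_sdiff, mem_singleton] at hs
    exact disjoint_union_left.2 ⟨hdisj t ht s hs.1 (Ne.symm hst), hdisj i hi s hs.1 (Ne.symm hs.2)⟩
  refine ⟨fun s hs => ?_, fun a ha b hb hab => ?_, ?_⟩
  · rcases eq_or_ne s t with rfl | hst
    · simpa using union_subset (hsub s ht) (hsub i hi)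
    · simpa [hst] using hsub s (mem_sdiff.1 hs).1
  · rcases eq_or_ne a t with rfl | hat
    · simpa [Ne.symm hab] using hdisj_merged b hb (Ne.symm hab)
    rcases eq_or_ne b t with rfl | hbt
    · simpa [hat] using (hdisj_merged a ha hat).symm
    · simpa [hat, hbt] using hdisj a (mem_sdiff.1 ha).1 b (mem_sdiff.1 hb).1 hab
  · rw [← hcov]
    ext x
    simp only [mem_biUnion, mem_sdiff, mem_singleton]
    constructor
    · rintro ⟨s, ⟨hs, hsi⟩, hx⟩
      rcases eq_or_ne s t with rfl | hst
      · rcases mem_union.1 (by simpa using hx) with hx | hx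
        exacts [⟨s, hs, hx⟩, ⟨i, hi, hx⟩]
      · exact ⟨s, hs, by simpa [hst] using hx⟩
    · rintro ⟨s, hs, hx⟩
      by_cases hs' : s = t ∨ s = i
      · exact ⟨t, ⟨ht, hti⟩, by rcases hs' with rfl | rfl <;> simp [hx]⟩
      · rw [not_or] at hs'
        exact ⟨s, ⟨hs, hs'.2⟩, by simpa [hs'.1] using hx⟩

end IsPartition

section MMS

variable {N M : Finset ℕ} {v : ℕ → ℝ}

def mmsCandidates (N M : Finset ℕ) (v : ℕ → ℝ) : Set ℝ :=
  { x | ∃ A : ℕ → Finset ℕ, IsPartition N M A ∧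
    x = sInf ((fun i => bval v (A i)) '' (N : Set ℕ)) }

theorem mms_eq_sSup_mmsCandidates : mms N M v = sSup (mmsCandidates N M v) := rfl

theorem finite_mmsCandidates (N M : Finset ℕ) (v : ℕ → ℝ) : (mmsCandidates N M v).Finite := by
  have hvals : ((fun B => bval v B) '' (M.powerset : Set (Finset ℕ))).Finite :=
    M.powerset.finite_toSet.image _
  refine (hvals.finite_subsets.image sInf).subset ?_
  rintro x ⟨A, hA, rfl⟩
  refine ⟨_, ?_, rfl⟩
  rintro y ⟨t, ht, rfl⟩
  exact ⟨A t, by simpa using hA.1 t ht, rfl⟩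

theorem sInf_bval_le (A : ℕ → Finset ℕ) {k : ℕ} (hk : k ∈ N) :
    sInf ((fun i => bval v (A i)) '' (N : Set ℕ)) ≤ bval v (A k) :=
  csInf_le ((N.finite_toSet.image _).bddBelow) ⟨k, hk, rfl⟩

theorem le_mms_of_isPartition {A : ℕ → Finset ℕ} {x : ℝ} (hN : N.Nonempty)
    (hA : IsPartition N M A) (hx : ∀ t ∈ N, x ≤ bval v (A t)) : x ≤ mms N M v :=
  (le_csInf ((coe_nonempty.2 hN).image _) (by rintro _ ⟨t, ht, rfl⟩; exact hx t ht)).trans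
    (le_csSup (finite_mmsCandidates N M v).bddAbove ⟨A, hA, rfl⟩)

theorem exists_isMMSPartition (hN : N.Nonempty) : ∃ A, IsMMSPartition N M v A := by
  obtain ⟨k, hk⟩ := hN
  have hne : (mmsCandidates N M v).Nonempty := by
    refine ⟨_, fun t => if t = k then M else ∅, ⟨fun t _ => ?_, fun a _ b _ hab => ?_, ?_⟩, rfl⟩
    · dsimp only; split_ifs <;> simp
    · dsimp only; split_ifs <;> simp_all
    · ext x
      simp only [mem_biUnion]
      exact ⟨fun ⟨t, _, hx⟩ => by split_ifs at hx <;> simp_all, fun hx => ⟨k, hk, by simpa⟩⟩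
  obtain ⟨A, hA, hmms⟩ := hne.csSup_mem (finite_mmsCandidates N M v)
  exact ⟨A, hA, fun t ht => by rw [mms_eq_sSup_mmsCandidates, hmms]; exact sInf_bval_le A ht⟩

theorem exists_isMMSPartition_mem {i j : ℕ} (hi : i ∈ N) (hj : j ∈ M) :
    ∃ A, IsMMSPartition N M v A ∧ j ∈ A i := by
  obtain ⟨A, hA, hAv⟩ := exists_isMMSPartition (M := M) (v := v) ⟨i, hi⟩
  obtain ⟨k, hk, hjk⟩ := mem_biUnion.1 (hA.2.2 ▸ hj)
  have hswap : ∀ x, Equiv.swap i k x ∈ N ↔ x ∈ N := fun x => by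
    rw [Equiv.swap_apply_def]
    split_ifs with h h' <;> simp_all
  refine ⟨A ∘ Equiv.swap i k, ⟨hA.comp_perm _ hswap, fun t ht => hAv _ ((hswap t).2 ht)⟩, ?_⟩
  simpa using hjk

end MMS

section Bundles

variable {v : ℕ → ℝ}

theorem add_le_bval_of_mem {B : Finset ℕ} (hnn : ∀ g ∈ B, 0 ≤ v g) {j g : ℕ} (hj : j ∈ B)
    (hg : g ∈ B) (hjg : j ≠ g) : v j + v g ≤ bval v B :=
  calc v j + v g = bval v {j, g} := (sum_pair hjg).symm
    _ ≤ bval v B := sum_le_sum_of_subset_of_nonneg (insert_subset hj (singleton_subset_iff.2 hg))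
        fun x hx _ => hnn x hx

theorem bval_le_bval_union_sdiff {X Y S : Finset ℕ} (hXY : Disjoint X Y) (hS : S ⊆ X ∪ Y)
    (hSY : bval v S ≤ bval v Y) : bval v X ≤ bval v ((X ∪ Y) \ S) := by
  have hsplit : bval v ((X ∪ Y) \ S) + bval v S = bval v X + bval v Y :=
    (sum_sdiff hS).trans (sum_union hXY)
  linarith

end Bundles

theorem mms_le_mms_sdiff_pair {N M : Finset ℕ} {v : ℕ → ℝ} (hnn : ∀ g ∈ M, 0 ≤ v g)
    {i j j' : ℕ} (hi : i ∈ N) (hN : (N \ {i}).Nonempty) (hj : j ∈ M) (hj' : j' ∈ M)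
    (hjj' : j ≠ j') (hmin : ∀ g ∈ M, g ≠ j → v j' ≤ v g) (hvj : v j < mms N M v) :
    mms N M v ≤ mms (N \ {i}) (M \ {j, j'}) v := by
  obtain ⟨A, ⟨hA, hAv⟩, hjA⟩ := exists_isMMSPartition_mem (v := v) hi hj
  have hpair : bval v {j, j'} ≤ bval v (A i) := by
    obtain ⟨g, hg, hgj⟩ : ∃ g ∈ A i, g ≠ j := by
      by_contra! h
      have hAi := hAv i hi
      rw [eq_singleton_iff_unique_mem.2 ⟨hjA, h⟩, bval, sum_singleton] at hAi
      linarith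
    calc bval v {j, j'} = v j + v j' := sum_pair hjj'
      _ ≤ v j + v g := add_le_add_right (hmin g (hA.1 i hi hg) hgj) _
      _ ≤ bval v (A i) := add_le_bval_of_mem (fun x hx => hnn x (hA.1 i hi hx)) hjA hg hgj.symm
  obtain ⟨t, ht, hj't⟩ : ∃ t ∈ N \ {i}, j' ∈ A t ∪ A i := by
    obtain ⟨s, hs, hj's⟩ := mem_biUnion.1 (hA.2.2 ▸ hj')
    by_cases hsi : s = i
    · obtain ⟨c, hc⟩ := hN
      exact ⟨c, hc, mem_union_right _ (hsi ▸ hj's)⟩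
    · exact ⟨s, by simp [hs, hsi], mem_union_left _ hj's⟩
  rw [mem_sdiff, mem_singleton] at ht
  have hS : {j, j'} ⊆ A t ∪ A i :=
    insert_subset (mem_union_right _ hjA) (singleton_subset_iff.2 hj't)
  refine le_mms_of_isPartition hN ((hA.merge hi ht.1 ht.2).sdiff {j, j'}) fun s hs => ?_
  rw [mem_sdiff, mem_singleton] at hs
  rcases eq_or_ne s t with rfl | hst
  · simpa using (hAv s hs.1).trans
      (bval_le_bval_union_sdiff (hA.2.1 s hs.1 i hi hs.2) hS hpair)
  · have hdisj : Disjoint (A s) {j, j'} :=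
      (disjoint_union_right.2 ⟨hA.2.1 s hs.1 t ht.1 hst, hA.2.1 s hs.1 i hi hs.2⟩).mono_right hS
    simpa [hst, sdiff_eq_self_of_disjoint hdisj] using hAv s hs.1

theorem isGreatest_erase_Icc {m : ℕ} (hm : 2 ≤ m) (j : ℕ) :
    IsGreatest (((Icc 1 m).erase j : Finset ℕ) : Set ℕ) (if j = m then m - 1 else m) := by
  constructor
  · simp only [mem_coe, mem_erase, mem_Icc]
    split_ifs <;> omega
  · intro g hg
    simp only [mem_coe, mem_erase, mem_Icc] at hg
    split_ifs <;> omega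

theorem two_item_reduction_from_one (n m : ℕ) (hm : 2 ≤ m) (v : ℕ → ℕ → ℝ)
    (hgoods : GoodsInstance (Finset.Icc 1 n) (Finset.Icc 1 m) v)
    (hord : OrderedGoods (Finset.Icc 1 n) (Finset.Icc 1 m) v)
    (i j : ℕ) (hi : i ∈ Finset.Icc 1 n) (hj : j ∈ Finset.Icc 1 m)
    (hval : mms (Finset.Icc 1 n) (Finset.Icc 1 m) (v i) ≤ v i j)
    (hothers : ∀ i' ∈ Finset.Icc 1 n, i' ≠ i →
      v i' j < mms (Finset.Icc 1 n) (Finset.Icc 1 m) (v i')) :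
    ValidReduction (Finset.Icc 1 n) (Finset.Icc 1 m) v {i}
      {j, if j = m then m - 1 else m} := by
  set j' := if j = m then m - 1 else m
  obtain ⟨hj'mem, hj'max⟩ := isGreatest_erase_Icc hm j
  obtain ⟨hj'j, hj'⟩ := mem_erase.1 (mem_coe.1 hj'mem)
  refine ⟨singleton_subset_iff.2 hi, insert_subset hj (singleton_subset_iff.2 hj'),
    ⟨fun _ => {j, j'}, IsPartition.singleton i _, fun t ht => ?_⟩, fun i' hi' => ?_⟩
  · rw [mem_singleton.1 ht, bval, sum_pair hj'j.symm]
    linarith [hval, hgoods i hi j' hj']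
  · rw [mem_sdiff, mem_singleton] at hi'
    exact mms_le_mms_sdiff_pair (hgoods i' hi'.1) hi ⟨i', by simp [hi'.1, hi'.2]⟩ hj hj'
      hj'j.symm (fun g hg hgj => hord i' hi'.1 g hg j' hj' (hj'max (mem_erase.2 ⟨hgj, hg⟩)))
      (hothers i' hi'.1 hi'.2)
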